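/- arXiv:1307.5967 — 5 statements merged into one kernel-verified Lean document; each statement's English description precedes it below -/
import Mathlib

section
/- (Hypergeometric FKG Inequality) Let Ω be a set with n ≥ 1 elements, let (B_i)_{i∈I} be a finite family of subsets of Ω, and let m be an integer with 0 ≤ m ≤ ⌊n/2⌋. Let P be the proportion of m-element subsets R of Ω such that B_i ⊄ R for all i ∈ I. Then for every η ∈ (0,1), P ≥ ∏_{i∈I} (1 − ((1+η)·m/n)^{|B_i|}) − exp(−η²·m/4). -/
/-!
Let `S` be a random subset of `Ω` containing each point independently with probability
`p = (1 + η) m / n`. The events `B i ⊄ S` are decreasing, so by Harris' inequality (FKG for the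
product measure) they hold simultaneously with probability at least `∏ i, (1 - p ^ #(B i))`.
Given `#S = k`, the set `S` is uniform among `k`-sets, and for a down-closed family the proportion
of `k`-sets in the family does not increase with `k` (local LYM). Hence that probability is at most
`P(#S < m)` plus the proportion `P` of good `m`-sets, and `P(#S < m) ≤ exp (-η² m / 4)` is a
Chernoff bound.
-/

open Finset
open scoped FinsetFamily

lemma sum_choose_mul_pow_mul_pow_eq_one (p : ℝ) (n : ℕ) :
    ∑ k ∈ range (n + 1), (n.choose k : ℝ) * (p ^ k * (1 - p) ^ (n - k)) = 1 := by
  simpa [mul_comm, mul_left_comm] using (add_pow p (1 - p) n).symm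

lemma one_add_le_exp_sub_sq_div_four {η : ℝ} (hη0 : 0 ≤ η) (hη1 : η ≤ 1) :
    1 + η ≤ Real.exp (η - η ^ 2 / 4) := by
  have ht : 0 ≤ η - η ^ 2 / 4 := by nlinarith
  have := Real.quadratic_le_exp_of_nonneg ht
  nlinarith

lemma sum_range_choose_mul_le_pow_mul_add_pow {p q t : ℝ} (hp : 0 ≤ p) (hq : 0 ≤ q) (ht : 1 ≤ t)
    {m n : ℕ} (hm : m ≤ n) :
    ∑ k ∈ range m, (n.choose k : ℝ) * (p ^ k * q ^ (n - k)) ≤ t ^ m * (p / t + q) ^ n := by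
  have ht0 : 0 < t := by linarith
  rw [add_pow, mul_sum]
  calc ∑ k ∈ range m, (n.choose k : ℝ) * (p ^ k * q ^ (n - k))
      ≤ ∑ k ∈ range m, t ^ m * ((p / t) ^ k * q ^ (n - k) * n.choose k) := by
        refine sum_le_sum fun k hk ↦ ?_
        have htk : t ^ k ≤ t ^ m := pow_le_pow_right₀ ht (mem_range.1 hk).le
        calc (n.choose k : ℝ) * (p ^ k * q ^ (n - k))
            = t ^ k * ((p / t) ^ k * q ^ (n - k) * n.choose k) := by
              rw [div_pow]; field_simp
          _ ≤ t ^ m * ((p / t) ^ k * q ^ (n - k) * n.choose k) := by gcongr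
    _ ≤ ∑ k ∈ range (n + 1), t ^ m * ((p / t) ^ k * q ^ (n - k) * n.choose k) :=
        sum_le_sum_of_subset_of_nonneg (range_subset_range.2 (by omega))
          fun k _ _ ↦ by positivity

-- The Chernoff bound `P(Bin(n, p) < m) ≤ exp (-η² m / 4)` for `n p = (1 + η) m`.
lemma sum_range_choose_mul_le_exp {η : ℝ} (hη0 : 0 ≤ η) (hη1 : η ≤ 1) {m n : ℕ}
    (hmn : (1 + η) * m ≤ n) :
    ∑ k ∈ range m, (n.choose k : ℝ) *
        (((1 + η) * m / n) ^ k * (1 - (1 + η) * m / n) ^ (n - k)) ≤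
      Real.exp (-(η ^ 2 * m / 4)) := by
  rcases Nat.eq_zero_or_pos n with rfl | hn
  · rw [Nat.cast_zero] at hmn
    have hm : (m : ℝ) ≤ 0 := by nlinarith
    simp [show m = 0 by exact_mod_cast hm.antisymm m.cast_nonneg]
  have hn' : (0 : ℝ) < n := by exact_mod_cast hn
  have hp0 : 0 ≤ (1 + η) * m / n := by positivity
  have hq0 : 0 ≤ 1 - (1 + η) * m / n := by rw [sub_nonneg, div_le_one hn']; exact hmn
  have hm : m ≤ n := by exact_mod_cast (by nlinarith : (m : ℝ) ≤ n)
  have hbase : (1 + η) * m / n / (1 + η) + (1 - (1 + η) * m / n) = 1 - η * m / n := by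
    field_simp; ring
  have hbase0 : 0 ≤ 1 - η * m / n := by rw [← hbase]; positivity
  calc _ ≤ (1 + η) ^ m * (1 - η * m / n) ^ n := by
        rw [← hbase]; exact sum_range_choose_mul_le_pow_mul_add_pow hp0 hq0 (by linarith) hm
    _ ≤ Real.exp (η - η ^ 2 / 4) ^ m * Real.exp (-(η * m / n)) ^ n := by
        gcongr
        · exact one_add_le_exp_sub_sq_div_four hη0 hη1
        · linarith [Real.add_one_le_exp (-(η * m / n))]
    _ = Real.exp (-(η ^ 2 * m / 4)) := by
        rw [← Real.exp_nat_mul, ← Real.exp_nat_mul, ← Real.exp_add]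
        congr 1
        field_simp
        ring

section LowerSet

variable {α : Type*} [DecidableEq α] {𝒜 : Finset (Finset α)}

lemma IsLowerSet.shadow_slice_succ_subset (h𝒜 : IsLowerSet (𝒜 : Set (Finset α))) (k : ℕ) :
    ∂ (𝒜 # (k + 1)) ⊆ 𝒜 # k := by
  intro s hs
  obtain ⟨t, ht, hst, hcard⟩ := mem_shadow_iff_exists_mem_card_add_one.1 hs
  rw [mem_slice] at ht ⊢
  exact ⟨h𝒜 hst ht.1, by omega⟩

lemma IsLowerSet.antitone_card_slice_div_choose [Fintype α]
    (h𝒜 : IsLowerSet (𝒜 : Set (Finset α))) :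
    Antitone fun k ↦ (#(𝒜 # k) : ℝ) / (Fintype.card α).choose k := by
  refine antitone_nat_of_succ_le fun k ↦ ?_
  calc (#(𝒜 # (k + 1)) : ℝ) / (Fintype.card α).choose (k + 1)
      ≤ #(∂ (𝒜 # (k + 1))) / (Fintype.card α).choose k :=
        local_lubell_yamamoto_meshalkin_inequality_div k.succ_ne_zero sized_slice
    _ ≤ #(𝒜 # k) / (Fintype.card α).choose k := by
        gcongr
        exact h𝒜.shadow_slice_succ_subset k

end LowerSet

section PBiased

variable {α : Type*} [Fintype α] {p : ℝ}

noncomputable def pBiasedWeight (p : ℝ) (s : Finset α) : ℝ :=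
  p ^ #s * (1 - p) ^ (Fintype.card α - #s)

noncomputable def pBiasedMeasure (p : ℝ) (𝒜 : Finset (Finset α)) : ℝ :=
  ∑ s ∈ 𝒜, pBiasedWeight p s

lemma pBiasedWeight_nonneg (hp0 : 0 ≤ p) (hp1 : p ≤ 1) (s : Finset α) :
    0 ≤ pBiasedWeight p s := by
  have : 0 ≤ 1 - p := by linarith
  unfold pBiasedWeight
  positivity

lemma pBiasedMeasure_nonneg (hp0 : 0 ≤ p) (hp1 : p ≤ 1) (𝒜 : Finset (Finset α)) :
    0 ≤ pBiasedMeasure p 𝒜 :=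
  sum_nonneg fun s _ ↦ pBiasedWeight_nonneg hp0 hp1 s

lemma pBiasedMeasure_eq_sum_card_slice (p : ℝ) (𝒜 : Finset (Finset α)) :
    pBiasedMeasure p 𝒜 = ∑ k ∈ range (Fintype.card α + 1),
      #(𝒜 # k) * (p ^ k * (1 - p) ^ (Fintype.card α - k)) := by
  rw [pBiasedMeasure, ← sum_fiberwise_of_maps_to (g := card)
    (fun s _ ↦ mem_range_succ_iff.2 (card_le_univ s))]
  refine sum_congr rfl fun k _ ↦ ?_
  rw [← nsmul_eq_mul, ← sum_const, slice]
  exact sum_congr rfl fun s hs ↦ by rw [pBiasedWeight, (mem_filter.1 hs).2]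

variable [DecidableEq α] {𝒜 ℬ : Finset (Finset α)}

lemma pBiasedWeight_mul_pBiasedWeight (s t : Finset α) :
    pBiasedWeight p s * pBiasedWeight p t =
      pBiasedWeight p (s ∩ t) * pBiasedWeight p (s ∪ t) := by
  have h := card_inter_add_card_union s t
  have hs := card_le_univ s
  have ht := card_le_univ t
  have hi := card_le_univ (s ∩ t)
  have hu := card_le_univ (s ∪ t)
  have hcard : Fintype.card α - #s + (Fintype.card α - #t) =
      Fintype.card α - #(s ∩ t) + (Fintype.card α - #(s ∪ t)) := by omega
  calc pBiasedWeight p s * pBiasedWeight p t = p ^ (#s + #t) *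
        (1 - p) ^ (Fintype.card α - #s + (Fintype.card α - #t)) := by
        unfold pBiasedWeight; ring
    _ = pBiasedWeight p (s ∩ t) * pBiasedWeight p (s ∪ t) := by
        rw [← h, hcard]; unfold pBiasedWeight; ring

lemma pBiasedMeasure_supset (p : ℝ) (B : Finset α) :
    pBiasedMeasure p {s | B ⊆ s} = p ^ #B := by
  have himage : ({s | B ⊆ s} : Finset (Finset α)) = Bᶜ.powerset.image (B ∪ ·) := by
    ext s
    simp only [mem_filter_univ, mem_image, mem_powerset]
    refine ⟨fun h ↦ ⟨s \ B, fun x hx ↦ ?_, union_sdiff_of_subset h⟩, ?_⟩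
    · simp [(mem_sdiff.1 hx).2]
    · rintro ⟨t, -, rfl⟩
      exact subset_union_left
  have hinj : Set.InjOn (B ∪ ·) (Bᶜ.powerset : Set (Finset α)) := fun t ht u hu htu ↦ by
    have ht' := disjoint_compl_right.mono_right (mem_powerset.1 ht)
    have hu' := disjoint_compl_right.mono_right (mem_powerset.1 hu)
    simpa [union_sdiff_cancel_left ht', union_sdiff_cancel_left hu'] using congr_arg (· \ B) htu
  rw [pBiasedMeasure, himage, sum_image hinj]
  calc ∑ t ∈ Bᶜ.powerset, pBiasedWeight p (B ∪ t)
      = ∑ t ∈ Bᶜ.powerset, p ^ #B * (p ^ #t * (1 - p) ^ (#Bᶜ - #t)) := by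
        refine sum_congr rfl fun t ht ↦ ?_
        have hdisj := disjoint_compl_right.mono_right (mem_powerset.1 ht)
        rw [pBiasedWeight, card_union_of_disjoint hdisj, card_compl, pow_add, mul_assoc,
          Nat.sub_add_eq]
    _ = p ^ #B := by rw [← mul_sum, sum_pow_mul_eq_add_pow, add_sub_cancel, one_pow, mul_one]

lemma pBiasedMeasure_univ (p : ℝ) : pBiasedMeasure p (univ : Finset (Finset α)) = 1 := by
  simpa using pBiasedMeasure_supset (α := α) p ∅

lemma pBiasedMeasure_not_supset (p : ℝ) (B : Finset α) :
    pBiasedMeasure p {s | ¬ B ⊆ s} = 1 - p ^ #B := by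
  have h := pBiasedMeasure_univ (α := α) p
  rw [pBiasedMeasure, ← sum_filter_add_sum_filter_not univ (fun s ↦ B ⊆ s)] at h
  rw [← pBiasedMeasure_supset p B]
  unfold pBiasedMeasure
  linarith

lemma IsLowerSet.pBiasedMeasure_mul_le (h𝒜 : IsLowerSet (𝒜 : Set (Finset α)))
    (hℬ : IsLowerSet (ℬ : Set (Finset α))) (hp0 : 0 ≤ p) (hp1 : p ≤ 1) :
    pBiasedMeasure p 𝒜 * pBiasedMeasure p ℬ ≤ pBiasedMeasure p (𝒜 ∩ ℬ) := by
  -- FKG needs monotone functions: indicators of lower sets are monotone on the order dual.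
  have hmono : ∀ 𝒞 : Finset (Finset α), IsLowerSet (𝒞 : Set (Finset α)) →
      Monotone fun s : (Finset α)ᵒᵈ ↦ if OrderDual.ofDual s ∈ 𝒞 then (1 : ℝ) else 0 := by
    intro 𝒞 h𝒞 s t hst
    dsimp only
    by_cases hs : OrderDual.ofDual s ∈ 𝒞
    · have ht : OrderDual.ofDual t ∈ 𝒞 := h𝒞 (OrderDual.ofDual_le_ofDual.2 hst) hs
      rw [if_pos hs, if_pos ht]
    · rw [if_neg hs]
      split_ifs <;> norm_num
  have key := fkg (α := (Finset α)ᵒᵈ) (μ := fun s ↦ pBiasedWeight p (OrderDual.ofDual s))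
    (f := fun s ↦ if OrderDual.ofDual s ∈ 𝒜 then 1 else 0)
    (g := fun s ↦ if OrderDual.ofDual s ∈ ℬ then 1 else 0)
    (fun s ↦ pBiasedWeight_nonneg hp0 hp1 _) (fun s ↦ by positivity) (fun s ↦ by positivity)
    (hmono 𝒜 h𝒜) (hmono ℬ hℬ)
    (fun s t ↦ ((pBiasedWeight_mul_pBiasedWeight _ _).trans (mul_comm _ _)).le)
  change (∑ s : Finset α, pBiasedWeight p s * (if s ∈ 𝒜 then 1 else 0)) *
      (∑ s : Finset α, pBiasedWeight p s * (if s ∈ ℬ then 1 else 0)) ≤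
      (∑ s : Finset α, pBiasedWeight p s) * (∑ s : Finset α, pBiasedWeight p s *
        ((if s ∈ 𝒜 then 1 else 0) * (if s ∈ ℬ then 1 else 0))) at key
  simp only [mul_ite, mul_one, mul_zero, sum_ite_mem, univ_inter] at key
  have huniv := pBiasedMeasure_univ (α := α) p
  unfold pBiasedMeasure at huniv ⊢
  rwa [huniv, one_mul, inter_comm] at key

lemma isLowerSet_filter_not_supset (B : Finset α) :
    IsLowerSet (({s | ¬ B ⊆ s} : Finset (Finset α)) : Set (Finset α)) := fun s t hts hs ↦ by
  simp only [coe_filter, mem_univ, true_and, Set.mem_ofPred_eq] at hs ⊢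
  exact fun hB ↦ hs (hB.trans hts)

lemma isLowerSet_filter_forall_mem {ι : Type*} {𝒜 : ι → Finset (Finset α)}
    (h𝒜 : ∀ i, IsLowerSet (𝒜 i : Set (Finset α))) (t : Finset ι) :
    IsLowerSet (({s | ∀ i ∈ t, s ∈ 𝒜 i} : Finset (Finset α)) : Set (Finset α)) :=
  fun s u hsu hs ↦ by
    simp only [coe_filter, mem_univ, true_and, Set.mem_ofPred_eq] at hs ⊢
    exact fun i hi ↦ h𝒜 i hsu (hs i hi)

lemma prod_pBiasedMeasure_le_pBiasedMeasure_filter {ι : Type*} {𝒜 : ι → Finset (Finset α)}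
    (h𝒜 : ∀ i, IsLowerSet (𝒜 i : Set (Finset α))) (hp0 : 0 ≤ p) (hp1 : p ≤ 1) (t : Finset ι) :
    ∏ i ∈ t, pBiasedMeasure p (𝒜 i) ≤ pBiasedMeasure p {s | ∀ i ∈ t, s ∈ 𝒜 i} := by
  classical
  induction t using Finset.induction_on with
  | empty => simp [pBiasedMeasure_univ]
  | insert a t ha ih =>
    have hinsert : ({s | ∀ i ∈ insert a t, s ∈ 𝒜 i} : Finset (Finset α)) =
        𝒜 a ∩ ({s | ∀ i ∈ t, s ∈ 𝒜 i} : Finset (Finset α)) := by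
      ext s
      simp
    rw [prod_insert ha, hinsert]
    calc pBiasedMeasure p (𝒜 a) * ∏ i ∈ t, pBiasedMeasure p (𝒜 i)
        ≤ pBiasedMeasure p (𝒜 a) * pBiasedMeasure p {s | ∀ i ∈ t, s ∈ 𝒜 i} :=
          mul_le_mul_of_nonneg_left ih (pBiasedMeasure_nonneg hp0 hp1 _)
      _ ≤ _ := (h𝒜 a).pBiasedMeasure_mul_le (isLowerSet_filter_forall_mem h𝒜 t) hp0 hp1

lemma IsLowerSet.pBiasedMeasure_le_add_card_slice_div_choose
    (h𝒜 : IsLowerSet (𝒜 : Set (Finset α))) (hp0 : 0 ≤ p) (hp1 : p ≤ 1) {m : ℕ}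
    (hm : m ≤ Fintype.card α) :
    pBiasedMeasure p 𝒜 ≤
      ∑ k ∈ range m, (Fintype.card α).choose k * (p ^ k * (1 - p) ^ (Fintype.card α - k)) +
        #(𝒜 # m) / (Fintype.card α).choose m := by
  set n := Fintype.card α
  set b : ℕ → ℝ := fun k ↦ p ^ k * (1 - p) ^ (n - k)
  have hb : ∀ k, 0 ≤ b k := fun k ↦ mul_nonneg (pow_nonneg hp0 k) (pow_nonneg (by linarith) _)
  set r := (#(𝒜 # m) : ℝ) / n.choose m
  have hlow : ∀ k ∈ range m, (#(𝒜 # k) : ℝ) * b k ≤ n.choose k * b k := fun k _ ↦ by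
    gcongr
    exact_mod_cast sized_slice.card_le
  have hhigh : ∀ k ∈ Ico m (n + 1), (#(𝒜 # k) : ℝ) * b k ≤ r * (n.choose k * b k) :=
    fun k hk ↦ by
    have hk0 : (0 : ℝ) < n.choose k := by
      exact_mod_cast Nat.choose_pos (Nat.lt_succ_iff.1 (mem_Ico.1 hk).2)
    have := h𝒜.antitone_card_slice_div_choose (mem_Ico.1 hk).1
    rw [div_le_iff₀ hk0] at this
    calc (#(𝒜 # k) : ℝ) * b k ≤ r * n.choose k * b k := mul_le_mul_of_nonneg_right this (hb k)
      _ = r * (n.choose k * b k) := mul_assoc _ _ _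
  rw [pBiasedMeasure_eq_sum_card_slice, ← sum_range_add_sum_Ico _ (by omega : m ≤ n + 1)]
  refine add_le_add (sum_le_sum hlow) ((sum_le_sum hhigh).trans ?_)
  rw [← mul_sum]
  refine mul_le_of_le_one_right (by positivity) ?_
  calc ∑ k ∈ Ico m (n + 1), (n.choose k : ℝ) * b k
      ≤ ∑ k ∈ range (n + 1), (n.choose k : ℝ) * b k :=
        sum_le_sum_of_subset_of_nonneg (by rw [range_eq_Ico]; exact Ico_subset_Ico_left m.zero_le)
          fun k _ _ ↦ mul_nonneg (Nat.cast_nonneg _) (hb k)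
    _ = 1 := sum_choose_mul_pow_mul_pow_eq_one p n

end PBiased

theorem stmt3_general (Ω : Type) [Fintype Ω] [DecidableEq Ω]
    (ι : Type) [Fintype ι] (B : ι → Finset Ω)
    (m : ℕ) (hm : m ≤ Fintype.card Ω / 2) (η : ℝ) (hη0 : 0 < η) (hη1 : η < 1) :
    (∏ i, (1 - ((1 + η) * (m : ℝ) / (Fintype.card Ω : ℝ)) ^ (B i).card)) -
        Real.exp (-(η ^ 2 * (m : ℝ) / 4)) ≤
      (((Finset.powersetCard m (Finset.univ : Finset Ω)).filter
        (fun R => ∀ i, ¬ B i ⊆ R)).card : ℝ) / ((Fintype.card Ω).choose m : ℝ) := by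
  set n := Fintype.card Ω
  have hmn : (1 + η) * m ≤ n := by
    have : (2 * m : ℝ) ≤ n := by exact_mod_cast (by omega : 2 * m ≤ n)
    nlinarith
  set p := (1 + η) * (m : ℝ) / n
  have hp0 : 0 ≤ p := by positivity
  have hp1 : p ≤ 1 := div_le_one_of_le₀ hmn n.cast_nonneg
  have harris := prod_pBiasedMeasure_le_pBiasedMeasure_filter
    (fun i ↦ isLowerSet_filter_not_supset (B i)) hp0 hp1 univ
  have hlayers := (isLowerSet_filter_forall_mem (fun i ↦ isLowerSet_filter_not_supset (B i))
    univ).pBiasedMeasure_le_add_card_slice_div_choose hp0 hp1 (show m ≤ n by omega)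
  have htail := sum_range_choose_mul_le_exp hη0.le hη1.le hmn
  have hslice : ({s | ∀ i ∈ (univ : Finset ι), s ∈ ({s | ¬ B i ⊆ s} : Finset (Finset Ω))} :
      Finset (Finset Ω)) # m = (powersetCard m univ).filter (fun R ↦ ∀ i, ¬ B i ⊆ R) := by
    ext s
    simp [mem_slice, mem_powersetCard, and_comm]
  simp only [pBiasedMeasure_not_supset] at harris
  rw [hslice] at hlayers
  linarith

theorem stmt3 (Ω : Type) [Fintype Ω] [DecidableEq Ω] (hΩ : 1 ≤ Fintype.card Ω)
    (ι : Type) [Fintype ι] (B : ι → Finset Ω)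
    (m : ℕ) (hm : m ≤ Fintype.card Ω / 2) (η : ℝ) (hη0 : 0 < η) (hη1 : η < 1) :
    (∏ i, (1 - ((1 + η) * (m : ℝ) / (Fintype.card Ω : ℝ)) ^ (B i).card)) -
        Real.exp (-(η ^ 2 * (m : ℝ) / 4)) ≤
      (((Finset.powersetCard m (Finset.univ : Finset Ω)).filter
        (fun R => ∀ i, ¬ B i ⊆ R)).card : ℝ) / ((Fintype.card Ω).choose m : ℝ) :=
  stmt3_general Ω ι B m hm η hη0 hη1
end

section
/- For every integer r ≥ 2 and all positive integers n_1 ≤ n_2 ≤ … ≤ n_r, the maximum number of edges in a subgraph of the complete r-partite graph K(n_1,…,n_r) that contains no clique on r vertices is exactly e(K(n_1,…,n_r)) − n_1·n_2. -/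
/-!
Upper bound: pick one vertex from each part. These `r` vertices span a clique of the complete
`r`-partite graph, so a `K_r`-free subgraph misses one of its edges. An edge between parts `i` and
`j` lies in a `1 / (nᵢ nⱼ) ≤ 1 / (n₁ n₂)` fraction of these transversals, so at least `n₁ n₂`
edges are missing. Lower bound: merging the two smallest parts leaves an `(r - 1)`-partite graph,
which has no `K_r` and misses exactly the `n₁ n₂` edges between them.
-/

open Finset Function SimpleGraph

variable {ι : Type*} {α : ι → Type*}

theorem Fintype.card_filter_apply_eq_and_apply_eq_mul [Fintype ι] [DecidableEq ι]
    [∀ i, Fintype (α i)] [∀ i, DecidableEq (α i)] {i j : ι} (hij : i ≠ j) (a : α i) (b : α j) :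
    #{f : ∀ k, α k | f i = a ∧ f j = b} * (Fintype.card (α i) * Fintype.card (α j)) =
      ∏ k, Fintype.card (α k) := by
  set s := update (fun k => (univ : Finset (α k))) i {a}
  have hfilter : ({f : ∀ k, α k | f i = a ∧ f j = b} : Finset _) =
      {f ∈ Fintype.piFinset s | f j = b} := by
    rw [Fintype.piFinset_update_singleton_eq_filter_piFinset_eq (fun k => univ) i (mem_univ a),
      filter_filter, Fintype.piFinset_univ]
  have hsj : #(s j) = Fintype.card (α j) := by simp [s, update_of_ne hij.symm]
  have hcard : ∀ k, #(s k) = update (fun k => Fintype.card (α k)) i 1 k := fun k =>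
    apply_update (fun k (t : Finset (α k)) => #t) _ i _ k
  rw [hfilter, Fintype.card_filter_piFinset_eq_of_mem _ _ (by simp [s, update_of_ne hij.symm]),
    mul_left_comm, mul_comm, ← hsj, prod_erase_mul _ _ (mem_univ j)]
  simp only [hcard]
  rw [prod_update_of_mem (mem_univ i), one_mul, sdiff_singleton_eq_erase,
    prod_erase_mul _ _ (mem_univ i)]

namespace SimpleGraph

theorem natCard_edgeSet_eq_add_ncard_sdiff {V : Type*} [Finite V] {G H : SimpleGraph V}
    (h : H ≤ G) : Nat.card G.edgeSet = Nat.card H.edgeSet + (G.edgeSet \ H.edgeSet).ncard := by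
  simp only [Nat.card_coe_set_eq]
  rw [add_comm, Set.ncard_sdiff_add_ncard_of_subset (edgeSet_mono h)]

theorem CliqueFree.exists_not_adj_sigma_mk [Fintype ι] {H : SimpleGraph (Σ i, α i)}
    (hH : H.CliqueFree (Fintype.card ι)) (f : ∀ i, α i) :
    ∃ i j, i ≠ j ∧ ¬ H.Adj ⟨i, f i⟩ ⟨j, f j⟩ := by
  by_contra! hadj
  let e : (⊤ : SimpleGraph ι) ↪g H :=
    { toFun := fun i => ⟨i, f i⟩
      inj' := fun i j h => congrArg Sigma.fst h
      map_rel_iff' := fun {i j} => ⟨by rintro h rfl; exact h.ne rfl, hadj i j⟩ }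
  exact cliqueFree_iff_top_free.1 hH e.isContained

theorem le_ncard_edgeSet_sdiff_of_cliqueFree [Fintype ι] [∀ i, Fintype (α i)]
    [∀ i, Nonempty (α i)] {H : SimpleGraph (Σ i, α i)} (hH : H.CliqueFree (Fintype.card ι))
    {m : ℕ} (hm : ∀ i j, i ≠ j → m ≤ Fintype.card (α i) * Fintype.card (α j)) :
    m ≤ ((completeMultipartiteGraph α).edgeSet \ H.edgeSet).ncard := by
  classical
  set D := ((completeMultipartiteGraph α).edgeSet \ H.edgeSet).toFinset
  set N := Fintype.card (∀ i, α i) with hN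
  let fiber (e : Sym2 (Σ i, α i)) : Finset (∀ i, α i) := {f | ∀ v ∈ e, f v.1 = v.2}
  have hcover : (univ : Finset (∀ i, α i)) ⊆ D.biUnion fiber := by
    intro f _
    obtain ⟨i, j, hij, hadj⟩ := hH.exists_not_adj_sigma_mk f
    exact mem_biUnion.2 ⟨s(⟨i, f i⟩, ⟨j, f j⟩), by simp [D, hij, hadj], by simp [fiber]⟩
  have hfiber : ∀ e ∈ D, #(fiber e) * m ≤ N := by
    intro e he
    induction e using Sym2.ind with | _ u v => ?_
    have huv : u.1 ≠ v.1 := (by simpa [D] using he : _ ∧ _).1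
    calc #(fiber s(u, v)) * m
        ≤ #{f : ∀ i, α i | f u.1 = u.2 ∧ f v.1 = v.2} *
            (Fintype.card (α u.1) * Fintype.card (α v.1)) := by
          gcongr
          · intro f
            simp [fiber]
          · exact hm _ _ huv
      _ = N := by rw [Fintype.card_filter_apply_eq_and_apply_eq_mul huv, hN, Fintype.card_pi]
  rw [Set.ncard_eq_toFinset_card']
  refine le_of_mul_le_mul_left ?_ (Fintype.card_pos : 0 < N)
  calc N * m ≤ (∑ e ∈ D, #(fiber e)) * m := by
        gcongr
        exact (card_le_card hcover).trans card_biUnion_le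
    _ = ∑ e ∈ D, #(fiber e) * m := sum_mul ..
    _ ≤ ∑ _e ∈ D, N := sum_le_sum hfiber
    _ = N * #D := by rw [sum_const, smul_eq_mul, mul_comm]

theorem cliqueFree_comap_top {V κ : Type*} [Fintype κ] (F : V → κ) :
    ((⊤ : SimpleGraph κ).comap F).CliqueFree (Fintype.card κ + 1) :=
  (Coloring.mk F fun h => h).colorable.cliqueFree (Nat.lt_succ_self _)

variable {κ : Type*} (α) (g : ι → κ)

theorem comap_top_le_completeMultipartiteGraph :
    (⊤ : SimpleGraph κ).comap (fun v : Σ i, α i => g v.1) ≤ completeMultipartiteGraph α :=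
  fun _ _ h e => h (congrArg g e)

theorem ncard_edgeSet_sdiff_comap_top [∀ i, Finite (α i)] {i₀ i₁ : ι}
    (hg : ∀ i j, i ≠ j → g i = g j → s(i, j) = s(i₀, i₁)) (h₀₁ : i₀ ≠ i₁) (hg₀₁ : g i₀ = g i₁) :
    ((completeMultipartiteGraph α).edgeSet \
        ((⊤ : SimpleGraph κ).comap (fun v : Σ i, α i => g v.1)).edgeSet).ncard =
      Nat.card (α i₀) * Nat.card (α i₁) := by
  let e (p : α i₀ × α i₁) : Sym2 (Σ i, α i) := s(⟨i₀, p.1⟩, ⟨i₁, p.2⟩)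
  have he : Injective e := by
    rintro ⟨a, b⟩ ⟨a', b'⟩ h
    rcases Sym2.eq_iff.1 h with ⟨ha, hb⟩ | ⟨ha, -⟩
    · simp_all
    · exact absurd (congrArg Sigma.fst ha) h₀₁
  have hrange : (completeMultipartiteGraph α).edgeSet \
      ((⊤ : SimpleGraph κ).comap (fun v : Σ i, α i => g v.1)).edgeSet = Set.range e := by
    ext x
    induction x using Sym2.ind with | _ u v => ?_
    obtain ⟨i, a⟩ := u
    obtain ⟨j, b⟩ := v
    simp only [Set.mem_sdiff, mem_edgeSet, comap_adj, top_adj, not_not, Set.mem_range, e]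
    constructor
    · rintro ⟨hij, hgij⟩
      rcases Sym2.eq_iff.1 (hg i j hij hgij) with ⟨rfl, rfl⟩ | ⟨rfl, rfl⟩
      · exact ⟨(a, b), rfl⟩
      · exact ⟨(b, a), Sym2.eq_swap⟩
    · rintro ⟨⟨a', b'⟩, h⟩
      rcases Sym2.eq_iff.1 h with ⟨h₁, h₂⟩ | ⟨h₁, h₂⟩
      · cases h₁; cases h₂; exact ⟨h₀₁, hg₀₁⟩
      · cases h₁; cases h₂; exact ⟨h₀₁.symm, hg₀₁.symm⟩
  rw [hrange, Set.ncard_range_of_injective he, Nat.card_prod]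

end SimpleGraph

theorem Fin.apply_zero_mul_apply_one_le_of_monotone {r : ℕ} {n : Fin r → ℕ} (hn : Monotone n)
    {i j : Fin r} (hij : i ≠ j) : n ⟨0, by omega⟩ * n ⟨1, by omega⟩ ≤ n i * n j := by
  wlog hlt : i < j generalizing i j
  · rw [mul_comm (n i)]
    exact this hij.symm (lt_of_le_of_ne (not_lt.1 hlt) hij.symm)
  exact Nat.mul_le_mul (hn (by simp [Fin.le_def])) (hn (by simp [Fin.le_def]; omega))

theorem stmt4 (r : ℕ) (hr : 2 ≤ r) (n : Fin r → ℕ) (hpos : ∀ i, 0 < n i)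
    (hmono : Monotone n) :
    IsGreatest
      {m : ℕ | ∃ H : SimpleGraph (Σ i : Fin r, Fin (n i)),
        H ≤ SimpleGraph.completeMultipartiteGraph (fun i : Fin r => Fin (n i)) ∧
        H.CliqueFree r ∧ Nat.card H.edgeSet = m}
      (Nat.card (SimpleGraph.completeMultipartiteGraph (fun i : Fin r => Fin (n i))).edgeSet -
        n ⟨0, by omega⟩ * n ⟨1, by omega⟩) := by
  have : ∀ i, Nonempty (Fin (n i)) := fun i => ⟨⟨0, hpos i⟩⟩
  constructor
  · -- merge parts `0` and `1` by sending part `i` to `i - 1`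
    let g : Fin r → Fin (r - 1) := fun i => ⟨i - 1, by omega⟩
    have hg : ∀ i j, i ≠ j → g i = g j → s(i, j) = s(⟨0, by omega⟩, ⟨1, by omega⟩) := by
      simp only [g, ne_eq, Fin.ext_iff, Sym2.eq_iff]
      omega
    have hle := comap_top_le_completeMultipartiteGraph (fun i : Fin r => Fin (n i)) g
    refine ⟨_, hle, ?_, ?_⟩
    · simpa [Nat.sub_add_cancel (by omega : 1 ≤ r)] using
        cliqueFree_comap_top (fun v : Σ i, Fin (n i) => g v.1)
    · rw [natCard_edgeSet_eq_add_ncard_sdiff hle,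
        ncard_edgeSet_sdiff_comap_top _ g hg (Fin.ne_of_val_ne zero_ne_one) rfl]
      simp
  · rintro _ ⟨H, hHK, hH, rfl⟩
    have hmissing := le_ncard_edgeSet_sdiff_of_cliqueFree (α := fun i => Fin (n i))
      (m := n ⟨0, by omega⟩ * n ⟨1, by omega⟩) (by rwa [Fintype.card_fin]) fun i j hij => by
        simpa only [Fintype.card_fin] using Fin.apply_zero_mul_apply_one_le_of_monotone hmono hij
    rw [natCard_edgeSet_eq_add_ncard_sdiff hHK]
    omega
end

section
/- For every integer r ≥ 2 and every γ > 0 there exists a constant c such that for every ε' > 0 there is n_0 with the following property: for all n ≥ n_0 and all integers m with c·n ≤ m ≤ ex(n, K_{r+1}), Σ_{Π ∈ P_{n,r} \ P_{n,r}(γ)} C(e(Π), m) ≤ ε' · C(ex(n, K_{r+1}), m). -/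
/-!
An unbalanced partition into `r` parts has a part whose size is off from `n / r` by more than
`γ n`, so by the variance identity its complete `r`-partite graph has at most
`(1 - 1/r - γ²) n² / 2` edges. Since the Turán graph has `(1 - 1/r) n² / 2 - n / 2` edges,
this is at most `(1 - δ) ex(n, K_{r+1})` with `δ = min(γ², 1/2)` once `δ n ≥ r`, and then
`C(a, m) ≤ x^m C(b, m)` for `a ≤ x b` bounds each term by `(1 - δ)^m C(ex(n, K_{r+1}), m)`.
There are at most `r^n` partitions into `r` parts, and `r^n (1 - δ)^m ≤ 2^{-n}` as soon as
`m ≥ c n` with `r (1 - δ)^c ≤ 1/2`.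
-/

open Finset

/-- `ex(n, K_k)`: the maximum number of edges of a `K_k`-free graph on `n` vertices. -/
noncomputable def exNum (n k : ℕ) : ℕ :=
  sSup {m : ℕ | ∃ G : SimpleGraph (Fin n), G.CliqueFree k ∧ Nat.card G.edgeSet = m}

/-- A partition of `[n]` is `γ`-balanced if each part has between `(1/r - γ)n` and
`(1/r + γ)n` elements. -/
def IsBalanced (n r : ℕ) (γ : ℝ) (P : Finpartition (Finset.univ : Finset (Fin n))) : Prop :=
  ∀ A ∈ P.parts, ((1 : ℝ) / r - γ) * n ≤ (A.card : ℝ) ∧ (A.card : ℝ) ≤ ((1 : ℝ) / r + γ) * n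

/-- The number of edges of the complete multipartite graph whose color classes are the parts
of `P`. -/
def ePart {n : ℕ} (P : Finpartition (Finset.univ : Finset (Fin n))) : ℕ :=
  n.choose 2 - ∑ A ∈ P.parts, A.card.choose 2

theorem Nat.cast_choose_le_pow_mul_cast_choose {K : Type*} [Field K] [LinearOrder K]
    [IsStrictOrderedRing K] {a b : ℕ} {x : K} (hx₀ : 0 ≤ x) (hx₁ : x ≤ 1)
    (hab : (a : K) ≤ x * b) (m : ℕ) : (a.choose m : K) ≤ x ^ m * b.choose m := by
  have hba : a ≤ b := by
    exact_mod_cast hab.trans (mul_le_of_le_one_left (Nat.cast_nonneg b) hx₁)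
  induction m with
  | zero => simp
  | succ m ih =>
    rcases le_or_gt a m with ham | hma
    · rw [Nat.choose_eq_zero_of_lt (by omega), Nat.cast_zero]
      positivity
    have hsucc (c : ℕ) (hc : m ≤ c) :
        (c.choose (m + 1) : K) * (m + 1) = c.choose m * (c - m) := by
      rw [← Nat.cast_sub hc]
      exact_mod_cast Nat.choose_succ_right_eq c m
    have hstep : (a : K) - m ≤ x * (b - m) := by
      linarith [mul_le_of_le_one_left (Nat.cast_nonneg (α := K) m) hx₁]
    refine le_of_mul_le_mul_right ?_ (by positivity : (0 : K) < m + 1)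
    calc (a.choose (m + 1) : K) * (m + 1) = a.choose m * (a - m) := hsucc a hma.le
      _ ≤ x ^ m * b.choose m * (x * (b - m)) :=
          mul_le_mul ih hstep (by linarith [(Nat.cast_lt (α := K)).2 hma]) (by positivity)
      _ = x ^ (m + 1) * b.choose (m + 1) * (m + 1) := by
          rw [mul_assoc _ _ (m + 1 : K), hsucc b (hma.le.trans hba)]; ring

namespace Finpartition

variable {α : Type*} [Fintype α] [DecidableEq α]

theorem ext_of_part_eq_part_iff {P Q : Finpartition (univ : Finset α)}
    (h : ∀ a b, P.part a = P.part b ↔ Q.part a = Q.part b) : P = Q := by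
  have hpart (a : α) : P.part a = Q.part a := by
    ext b
    rw [P.mem_part_iff_part_eq_part (mem_univ b) (mem_univ a),
      Q.mem_part_iff_part_eq_part (mem_univ b) (mem_univ a), h]
  ext A
  constructor
  · intro hA
    obtain ⟨a, ha⟩ := P.nonempty_of_mem_parts hA
    rw [← P.part_eq_of_mem hA ha, hpart]
    exact Q.part_mem.2 (mem_univ a)
  · intro hA
    obtain ⟨a, ha⟩ := Q.nonempty_of_mem_parts hA
    rw [← Q.part_eq_of_mem hA ha, ← hpart]
    exact P.part_mem.2 (mem_univ a)

theorem card_filter_card_parts_eq_le (r : ℕ) :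
    #{P : Finpartition (univ : Finset α) | #P.parts = r} ≤ r ^ Fintype.card α := by
  let label (P : Finpartition (univ : Finset α)) (a : α) : ℕ :=
    P.parts.equivFin ⟨P.part a, P.part_mem.2 (mem_univ a)⟩
  have label_eq_iff (P : Finpartition (univ : Finset α)) (a b : α) :
      label P a = label P b ↔ P.part a = P.part b := by
    simp only [label, Fin.val_inj, EmbeddingLike.apply_eq_iff_eq, Subtype.mk.injEq]
  calc #{P : Finpartition (univ : Finset α) | #P.parts = r}
      ≤ #(Fintype.piFinset fun _ : α => range r) := by
        refine card_le_card_of_injOn label (fun P hP => ?_) (fun P _ Q _ hPQ => ?_)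
        · simp only [coe_filter, mem_univ, true_and, Set.mem_ofPred_eq] at hP
          simpa [label, hP] using fun a => (P.parts.equivFin _).is_lt
        · refine ext_of_part_eq_part_iff fun a b => ?_
          rw [← label_eq_iff, ← label_eq_iff, hPQ]
    _ = r ^ Fintype.card α := by simp

end Finpartition

theorem card_edgeFinset_le_exNum {n k : ℕ} (G : SimpleGraph (Fin n)) [DecidableRel G.Adj]
    (hG : G.CliqueFree k) : #G.edgeFinset ≤ exNum n k := by
  refine le_csSup ⟨Nat.card (Sym2 (Fin n)), ?_⟩
    ⟨G, hG, by rw [Nat.card_eq_fintype_card, SimpleGraph.edgeFinset_card]⟩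
  rintro m ⟨H, -, rfl⟩
  exact Nat.card_le_card_of_injective Subtype.val Subtype.val_injective

theorem card_filter_mod_eq_le (n r c : ℕ) : #{w : Fin n | (w : ℕ) % r = c} ≤ n / r + 1 := by
  calc #{w : Fin n | (w : ℕ) % r = c} ≤ #(range (n / r + 1)) := by
        refine card_le_card_of_injOn (fun w => (w : ℕ) / r) (fun w _ => ?_)
          (fun v hv w hw h => ?_)
        · simpa [Nat.lt_succ_iff] using Nat.div_le_div_right w.is_lt.le
        · simp only [coe_filter, mem_univ, true_and, Set.mem_ofPred_eq] at hv hw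
          exact Fin.val_injective (Nat.ext_div_modEq h (hv.trans hw.symm))
    _ = n / r + 1 := card_range _

namespace SimpleGraph

theorem degree_turanGraph_add_card (n r : ℕ) (v : Fin n) :
    (turanGraph n r).degree v + #{w : Fin n | (w : ℕ) % r = v % r} = n := by
  rw [← card_neighborFinset_eq_degree, neighborFinset_eq_filter, add_comm]
  simp only [turanGraph_adj, ne_eq, eq_comm (a := (v : ℕ) % r)]
  rw [card_filter_add_card_filter_not, card_univ, Fintype.card_fin]

theorem mul_le_two_mul_card_edgeFinset_turanGraph (n r : ℕ) :
    (n : ℝ) * (n - n / r - 1) ≤ 2 * #(turanGraph n r).edgeFinset := by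
  have hdeg (v : Fin n) : (n : ℝ) - n / r - 1 ≤ (turanGraph n r).degree v := by
    have h := degree_turanGraph_add_card n r v
    have hle := card_filter_mod_eq_le n r (v % r)
    have hdiv : ((n / r : ℕ) : ℝ) ≤ n / r := Nat.cast_div_le
    have : (n : ℝ) ≤ (turanGraph n r).degree v + (n / r : ℕ) + 1 := by exact_mod_cast (by omega)
    linarith
  calc (n : ℝ) * (n - n / r - 1) = ∑ _v : Fin n, ((n : ℝ) - n / r - 1) := by
        rw [sum_const, card_univ, Fintype.card_fin, nsmul_eq_mul]
    _ ≤ ∑ v, ((turanGraph n r).degree v : ℝ) := sum_le_sum fun v _ => hdeg v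
    _ = 2 * #(turanGraph n r).edgeFinset := by
        exact_mod_cast sum_degrees_eq_twice_card_edges (turanGraph n r)

end SimpleGraph

theorem mul_le_two_mul_exNum {n r : ℕ} (hr : 0 < r) :
    (n : ℝ) * (n - n / r - 1) ≤ 2 * exNum n (r + 1) := by
  have h := card_edgeFinset_le_exNum _ (SimpleGraph.turanGraph_cliqueFree (n := n) hr)
  have : (#(SimpleGraph.turanGraph n r).edgeFinset : ℝ) ≤ exNum n (r + 1) := by exact_mod_cast h
  linarith [SimpleGraph.mul_le_two_mul_card_edgeFinset_turanGraph n r]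

theorem Finset.sum_sq_eq_sum_sq_sub_mean_add {ι K : Type*} [Field K] [CharZero K]
    (s : Finset ι) (f : ι → K) :
    ∑ i ∈ s, f i ^ 2 = ∑ i ∈ s, (f i - (∑ j ∈ s, f j) / #s) ^ 2 + (∑ i ∈ s, f i) ^ 2 / #s := by
  rcases s.eq_empty_or_nonempty with rfl | hs
  · simp
  have hcard : (#s : K) ≠ 0 := Nat.cast_ne_zero.2 hs.card_pos.ne'
  simp only [sub_sq, sum_add_distrib, sum_sub_distrib, sum_const, nsmul_eq_mul, ← sum_mul,
    ← mul_sum]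
  field_simp
  ring

theorem sum_cast_card_parts {n : ℕ} (P : Finpartition (univ : Finset (Fin n))) :
    ∑ A ∈ P.parts, (#A : ℝ) = n := by
  exact_mod_cast P.sum_card_parts.trans (card_fin n)

theorem cast_ePart {n : ℕ} (P : Finpartition (univ : Finset (Fin n))) :
    (ePart P : ℝ) = (n ^ 2 - ∑ A ∈ P.parts, (#A : ℝ) ^ 2) / 2 := by
  have hsum := sum_cast_card_parts P
  have hchoose : ∑ A ∈ P.parts, ((#A).choose 2 : ℝ) = (∑ A ∈ P.parts, (#A : ℝ) ^ 2 - n) / 2 := by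
    simp only [Nat.cast_choose_two, ← hsum, ← sum_sub_distrib, sum_div]
    exact sum_congr rfl fun A _ => by ring
  have hsq : ∑ A ∈ P.parts, (#A : ℝ) ^ 2 ≤ n ^ 2 :=
    hsum ▸ sum_sq_le_sq_sum_of_nonneg fun A _ => Nat.cast_nonneg _
  have hle : ∑ A ∈ P.parts, (#A).choose 2 ≤ n.choose 2 := by
    have : ∑ A ∈ P.parts, ((#A).choose 2 : ℝ) ≤ n.choose 2 := by
      rw [hchoose, Nat.cast_choose_two]
      linarith
    exact_mod_cast this
  rw [ePart, Nat.cast_sub hle, Nat.cast_sum, hchoose, Nat.cast_choose_two]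
  ring

theorem ePart_le_of_not_isBalanced {n r : ℕ} {γ : ℝ} (hγ : 0 ≤ γ)
    (P : Finpartition (univ : Finset (Fin n))) (hP : #P.parts = r)
    (hPb : ¬IsBalanced n r γ P) : (ePart P : ℝ) ≤ (1 - 1 / r - γ ^ 2) * n ^ 2 / 2 := by
  obtain ⟨A, hA, hdev⟩ : ∃ A ∈ P.parts, γ * n ≤ |(#A : ℝ) - n / r| := by
    simp only [IsBalanced, not_forall, not_and_or, not_le] at hPb
    obtain ⟨A, hA, hlt | hlt⟩ := hPb
    · refine ⟨A, hA, le_abs.2 (.inr ?_)⟩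
      linarith [show (1 / r - γ) * n = (n / r : ℝ) - γ * n by ring]
    · refine ⟨A, hA, le_abs.2 (.inl ?_)⟩
      linarith [show (1 / r + γ) * n = (n / r : ℝ) + γ * n by ring]
  have hsq : (γ * n) ^ 2 ≤ ((#A : ℝ) - n / r) ^ 2 :=
    sq_le_sq.2 (by rwa [abs_of_nonneg (by positivity)])
  have hvar := sum_sq_eq_sum_sq_sub_mean_add P.parts fun A => (#A : ℝ)
  rw [sum_cast_card_parts, hP] at hvar
  have hA_le := single_le_sum (f := fun B => ((#B : ℝ) - n / r) ^ 2)
    (fun _ _ => sq_nonneg _) hA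
  rw [cast_ePart]
  linarith [show (1 - 1 / r - γ ^ 2) * n ^ 2 / 2 = (n ^ 2 - n ^ 2 / r - (γ * n) ^ 2 : ℝ) / 2 by
    ring]

theorem ePart_le_mul_exNum {n r : ℕ} (hr : 0 < r) {γ δ : ℝ} (hγ : 0 ≤ γ) (hδγ : δ ≤ γ ^ 2)
    (hδ₁ : δ ≤ 1) (hδn : r ≤ δ * n) (P : Finpartition (univ : Finset (Fin n)))
    (hP : #P.parts = r) (hPb : ¬IsBalanced n r γ P) :
    (ePart P : ℝ) ≤ (1 - δ) * exNum n (r + 1) := by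
  have hrR : (0 : ℝ) < r := Nat.cast_pos.2 hr
  -- `δ n ≥ r` lets the gain `δ n² / r` absorb the linear loss `n` of the Turán bound
  have hloss : (n : ℝ) ≤ δ * n ^ 2 / r := by
    rw [le_div_iff₀ hrR]
    nlinarith [(Nat.cast_nonneg n : (0 : ℝ) ≤ n)]
  calc (ePart P : ℝ) ≤ (1 - 1 / r - γ ^ 2) * n ^ 2 / 2 := ePart_le_of_not_isBalanced hγ P hP hPb
    _ ≤ (1 - δ) * (n * (n - n / r - 1) / 2) := by
        have : (1 - δ) * (n * (n - n / r - 1) / 2) - (1 - 1 / r - γ ^ 2) * n ^ 2 / 2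
            = ((γ ^ 2 - δ) * n ^ 2 + (δ * n ^ 2 / r - n) + δ * n) / 2 := by ring
        linarith [mul_nonneg (sub_nonneg.2 hδγ) (sq_nonneg (n : ℝ))]
    _ ≤ (1 - δ) * exNum n (r + 1) := by
        gcongr
        linarith [mul_le_two_mul_exNum (n := n) hr]

theorem pow_mul_pow_le_mul_pow_pow {R : Type*} [CommSemiring R] [PartialOrder R]
    [IsOrderedRing R] {a x : R} {K m n : ℕ} (ha : 0 ≤ a) (hx₀ : 0 ≤ x) (hx₁ : x ≤ 1)
    (hm : K * n ≤ m) : a ^ n * x ^ m ≤ (a * x ^ K) ^ n := by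
  rw [mul_pow, ← pow_mul]
  exact mul_le_mul_of_nonneg_left (pow_le_pow_of_le_one hx₀ hx₁ hm) (pow_nonneg ha n)

open Classical in
theorem sum_choose_ePart_not_isBalanced_le {n r : ℕ} (hr : 0 < r) {γ δ : ℝ} (hγ : 0 ≤ γ)
    (hδγ : δ ≤ γ ^ 2) (hδ₁ : δ ≤ 1) (hδn : r ≤ δ * n) (m : ℕ) :
    ∑ P : Finpartition (univ : Finset (Fin n)) with #P.parts = r ∧ ¬IsBalanced n r γ P,
        ((ePart P).choose m : ℝ) ≤ r ^ n * (1 - δ) ^ m * (exNum n (r + 1)).choose m := by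
  have hδ : 0 < δ := pos_of_mul_pos_left ((Nat.cast_pos.2 hr).trans_le hδn) n.cast_nonneg
  set S : Finset _ :=
    {P : Finpartition (univ : Finset (Fin n)) | #P.parts = r ∧ ¬IsBalanced n r γ P}
  have hS : #S ≤ r ^ n := by
    simpa using (card_le_card (monotone_filter_right univ fun _ _ h => h.1)).trans
      (Finpartition.card_filter_card_parts_eq_le (α := Fin n) r)
  calc ∑ P ∈ S, ((ePart P).choose m : ℝ)
      ≤ #S • ((1 - δ) ^ m * (exNum n (r + 1)).choose m) := by
        refine sum_le_card_nsmul _ _ _ fun P hP => ?_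
        obtain ⟨hP, hPb⟩ := (mem_filter.1 hP).2
        exact Nat.cast_choose_le_pow_mul_cast_choose (by linarith) (by linarith)
          (ePart_le_mul_exNum hr hγ hδγ hδ₁ hδn P hP hPb) m
    _ ≤ r ^ n * (1 - δ) ^ m * (exNum n (r + 1)).choose m := by
        rw [nsmul_eq_mul, ← mul_assoc]
        gcongr
        exact_mod_cast hS

theorem stmt7 (r : ℕ) (hr : 2 ≤ r) (γ : ℝ) (hγ : 0 < γ) :
    ∃ c : ℝ, ∀ ε' : ℝ, 0 < ε' → ∃ n₀ : ℕ, ∀ n, n₀ ≤ n → ∀ m : ℕ,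
      c * (n : ℝ) ≤ (m : ℝ) → m ≤ exNum n (r + 1) →
      (∑ᶠ (P : Finpartition (Finset.univ : Finset (Fin n)))
          (_ : P.parts.card = r ∧ ¬ IsBalanced n r γ P), ((ePart P).choose m : ℝ)) ≤
        ε' * ((exNum n (r + 1)).choose m : ℝ) := by
  classical
  set δ : ℝ := min (γ ^ 2) (1 / 2)
  have hδ : 0 < δ := lt_min (by positivity) one_half_pos
  have hδ₁ : δ ≤ 1 / 2 := min_le_right _ _
  obtain ⟨K, hK⟩ := exists_pow_lt_of_lt_one (by positivity : (0 : ℝ) < 1 / (2 * r))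
    (by linarith : 1 - δ < 1)
  have hrK : (r : ℝ) * (1 - δ) ^ K ≤ 1 / 2 := by
    calc (r : ℝ) * (1 - δ) ^ K ≤ r * (1 / (2 * r)) := by gcongr
      _ = 1 / 2 := by field_simp
  refine ⟨K, fun ε' hε' => ?_⟩
  obtain ⟨N, hN⟩ := exists_pow_lt_of_lt_one hε' one_half_lt_one
  refine ⟨max N ⌈r / δ⌉₊, fun n hn m hm _ => ?_⟩
  have hδn : (r : ℝ) ≤ δ * n := by
    rw [← div_le_iff₀' hδ]
    exact (Nat.le_ceil _).trans (by exact_mod_cast le_of_max_le_right hn)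
  rw [finsum_eq_sum_of_fintype]
  simp only [finsum_eq_if]
  rw [← sum_filter]
  calc _ ≤ r ^ n * (1 - δ) ^ m * (exNum n (r + 1)).choose m :=
        sum_choose_ePart_not_isBalanced_le (by omega) hγ.le (min_le_left _ _) (by linarith) hδn m
    _ ≤ (1 / 2) ^ n * (exNum n (r + 1)).choose m := by
        gcongr
        calc (r : ℝ) ^ n * (1 - δ) ^ m ≤ (r * (1 - δ) ^ K) ^ n :=
              pow_mul_pow_le_mul_pow_pow (Nat.cast_nonneg r) (by linarith) (by linarith)
                (by exact_mod_cast hm)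
          _ ≤ (1 / 2) ^ n :=
              pow_le_pow_left₀ (mul_nonneg (Nat.cast_nonneg r) (pow_nonneg (by linarith) K)) hrK n
    _ ≤ ε' * (exNum n (r + 1)).choose m := by
        gcongr
        exact (pow_le_pow_of_le_one (by norm_num) (by norm_num) (le_of_max_le_left hn)).trans
          hN.le
end

section
/- Let r ≥ 2 and n be integers, let Π be a partition of [n] = {1,…,n} into r parts, identified with the complete r-partite graph with those parts, and let ξ, δ ∈ (0,1]. Then for all integers m and t with 0 ≤ t ≤ δ·m and m ≤ e(Π) − ξ·n²: C(e(Π^c), t) · C(e(Π), m−t) ≤ (e/(ξ·δ))^{δ·m} · C(e(Π), m), where e on the right-hand side denotes Euler's number. -/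
open Finset

/-!
Write `E = e(Π)` and `F = e(Πᶜ) ≤ n²`, so that `ξ F ≤ E - m`. Moving `t` elements out of an
`m`-set changes `C(E, ·)` by a factor at most `(m / (E - m))ᵗ`, and `C(F, t) ≤ (e F / t)ᵗ`;
together `C(F, t) C(E, m - t) ≤ (e m / (ξ t))ᵗ C(E, m)`. Finally `(x / t)ᵗ ≤ e^(x - t)` with
`x = δ m` turns `(e m / (ξ t))ᵗ = (A x / t)ᵗ`, `A = e / (ξ δ) ≥ e`, into at most `A^x`.
-/

open Real Nat

lemma Nat.choose_le_exp_one_mul_div_pow (n k : ℕ) :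
    (n.choose k : ℝ) ≤ (exp 1 * n / k) ^ k := by
  rcases k.eq_zero_or_pos with rfl | hk
  · simp
  have hfac : (0 : ℝ) < k ! := mod_cast k.factorial_pos
  have hkk : (k : ℝ) ^ k ≤ exp 1 ^ k * k ! := by
    rw [← exp_nat_mul, mul_one, ← div_le_iff₀ hfac]
    exact pow_div_factorial_le_exp _ (Nat.cast_nonneg k) k
  calc (n.choose k : ℝ) ≤ n ^ k / k ! := by exact_mod_cast Nat.choose_le_pow_div k n
    _ ≤ (exp 1 * n / k) ^ k := by
      rw [div_pow, mul_pow, div_le_div_iff₀ hfac (by positivity)]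
      nlinarith [mul_le_mul_of_nonneg_left hkk (pow_nonneg (Nat.cast_nonneg n) k)]

lemma Nat.sub_pow_mul_choose_sub_le {E m : ℕ} (hmE : m ≤ E) :
    ∀ t, t ≤ m → (E - m) ^ t * E.choose (m - t) ≤ m ^ t * E.choose m
  | 0, _ => by simp
  | t + 1, htm => by
    obtain ⟨k, hk⟩ : ∃ k, m - t = k + 1 := ⟨m - t - 1, by omega⟩
    have hstep : (E - m) * E.choose k ≤ m * E.choose (k + 1) := by
      refine Nat.le_of_mul_le_mul_right ?_ (show 0 < E - k by omega)
      calc (E - m) * E.choose k * (E - k) = (E - m) * (E.choose (k + 1) * (k + 1)) := by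
            rw [Nat.choose_succ_right_eq]; ring
        _ ≤ (E - k) * m * E.choose (k + 1) := by
            rw [← mul_assoc, mul_right_comm]
            exact Nat.mul_le_mul_right _ (Nat.mul_le_mul (by omega) (by omega))
        _ = m * E.choose (k + 1) * (E - k) := by ring
    calc (E - m) ^ (t + 1) * E.choose (m - (t + 1))
        = (E - m) ^ t * ((E - m) * E.choose k) := by rw [show m - (t + 1) = k by omega]; ring
      _ ≤ (E - m) ^ t * (m * E.choose (m - t)) := by
          rw [hk]; exact Nat.mul_le_mul_left _ hstep
      _ = m * ((E - m) ^ t * E.choose (m - t)) := by ring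
      _ ≤ m * (m ^ t * E.choose m) :=
          Nat.mul_le_mul_left _ (Nat.sub_pow_mul_choose_sub_le hmE t (by omega))
      _ = m ^ (t + 1) * E.choose m := by ring

lemma Real.div_natCast_pow_le_exp_sub {x : ℝ} (hx : 0 ≤ x) (t : ℕ) :
    (x / t) ^ t ≤ exp (x - t) := by
  rcases t.eq_zero_or_pos with rfl | ht
  · simpa using hx
  have ht' : (0 : ℝ) < t := mod_cast ht
  calc (x / t) ^ t ≤ exp (x / t - 1) ^ t := by
        gcongr
        linarith [add_one_le_exp (x / t - 1)]
    _ = exp (x - t) := by rw [← exp_nat_mul]; congr 1; field_simp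

lemma Real.mul_div_natCast_pow_le_rpow {A x : ℝ} (hA : exp 1 ≤ A) {t : ℕ} (ht : (t : ℝ) ≤ x) :
    (A * (x / t)) ^ t ≤ A ^ x := by
  have hA0 : 0 < A := (exp_pos 1).trans_le hA
  calc (A * (x / t)) ^ t ≤ A ^ t * exp (x - t) := by
        rw [mul_pow]; gcongr; exact div_natCast_pow_le_exp_sub ((Nat.cast_nonneg t).trans ht) t
    _ ≤ A ^ (t : ℝ) * A ^ (x - t) := by
        rw [rpow_natCast, ← exp_one_rpow]
        gcongr
    _ = A ^ x := by rw [← rpow_add hA0]; ring_nf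

theorem choose_mul_choose_sub_le {F E m t : ℕ} {ξ δ : ℝ} (hξ0 : 0 < ξ) (hξ1 : ξ ≤ 1)
    (hδ0 : 0 < δ) (hδ1 : δ ≤ 1) (ht : (t : ℝ) ≤ δ * m) (hF : ξ * F ≤ E - m) :
    (F.choose t : ℝ) * E.choose (m - t) ≤ (exp 1 / (ξ * δ)) ^ (δ * m) * E.choose m := by
  have hmE : m ≤ E := by
    have : (m : ℝ) ≤ E := by nlinarith [(Nat.cast_nonneg F : (0 : ℝ) ≤ F)]
    exact_mod_cast this
  have htm : t ≤ m := by
    have : (t : ℝ) ≤ m := ht.trans (by nlinarith [(Nat.cast_nonneg m : (0 : ℝ) ≤ m)])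
    exact_mod_cast this
  have hA : exp 1 ≤ exp 1 / (ξ * δ) :=
    le_div_self (exp_pos 1).le (by positivity) (mul_le_one₀ hξ1 hδ0.le hδ1)
  have hF' : (F : ℝ) ≤ (E - m) / ξ := by rw [le_div_iff₀ hξ0]; linarith
  have hratio : (E - m : ℝ) ^ t * E.choose (m - t) ≤ m ^ t * E.choose m := by
    have := Nat.sub_pow_mul_choose_sub_le hmE t htm
    rw [← Nat.cast_sub hmE]
    exact_mod_cast this
  calc (F.choose t : ℝ) * E.choose (m - t)
      ≤ (exp 1 * ((E - m) / ξ) / t) ^ t * E.choose (m - t) := by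
        gcongr
        exact (F.choose_le_exp_one_mul_div_pow t).trans (by gcongr)
    _ = (exp 1 / (ξ * t)) ^ t * ((E - m : ℝ) ^ t * E.choose (m - t)) := by
        rw [← mul_assoc, ← mul_pow]; congr 2; field_simp
    _ ≤ (exp 1 / (ξ * t)) ^ t * (m ^ t * E.choose m) := by gcongr
    _ = (exp 1 / (ξ * δ) * (δ * m / t)) ^ t * E.choose m := by
        rw [← mul_assoc, ← mul_pow]; congr 2; field_simp
    _ ≤ (exp 1 / (ξ * δ)) ^ (δ * m) * E.choose m := by
        gcongr
        exact mul_div_natCast_pow_le_rpow hA ht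

theorem stmt16_general (n : ℕ) (P : Finpartition (Finset.univ : Finset (Fin n)))
    (ξ δ : ℝ) (hξ0 : 0 < ξ) (hξ1 : ξ ≤ 1) (hδ0 : 0 < δ) (hδ1 : δ ≤ 1)
    (m t : ℕ) (ht0 : (t : ℝ) ≤ δ * (m : ℝ)) (hm : (m : ℝ) ≤ (ePart P : ℝ) - ξ * (n : ℝ) ^ 2) :
    ((n.choose 2 - ePart P).choose t : ℝ) * ((ePart P).choose (m - t) : ℝ) ≤
      (Real.exp 1 / (ξ * δ)) ^ (δ * (m : ℝ)) * ((ePart P).choose m : ℝ) := by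
  have hF : ((n.choose 2 - ePart P : ℕ) : ℝ) ≤ n ^ 2 := by
    exact_mod_cast (Nat.sub_le _ _).trans (Nat.choose_le_pow n 2)
  exact choose_mul_choose_sub_le hξ0 hξ1 hδ0 hδ1 ht0 (by nlinarith)

theorem stmt16 (r n : ℕ) (hr : 2 ≤ r) (P : Finpartition (Finset.univ : Finset (Fin n)))
    (hP : P.parts.card = r) (ξ δ : ℝ) (hξ0 : 0 < ξ) (hξ1 : ξ ≤ 1) (hδ0 : 0 < δ) (hδ1 : δ ≤ 1)
    (m t : ℕ) (ht0 : (t : ℝ) ≤ δ * (m : ℝ)) (hm : (m : ℝ) ≤ (ePart P : ℝ) - ξ * (n : ℝ) ^ 2) :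
    ((n.choose 2 - ePart P).choose t : ℝ) * ((ePart P).choose (m - t) : ℝ) ≤
      (Real.exp 1 / (ξ * δ)) ^ (δ * (m : ℝ)) * ((ePart P).choose m : ℝ) :=
  stmt16_general n P ξ δ hξ0 hξ1 hδ0 hδ1 m t ht0 hm
end

section
/- Let k ≥ 1 be an integer, let α, λ ∈ (0,1), let V_1,…,V_k be finite sets, and let d be an integer with 2 ≤ d ≤ min{|V_1|,…,|V_k|}. Suppose H ⊆ V_1 × … × V_k satisfies |H| ≤ (α·λ)^k·∏_{i=1}^k |V_i|. Then the number of k-tuples (W_1,…,W_k), where each W_i is a d-element subset of V_i, for which |H ∩ (W_1 × … × W_k)| > k·λ·d^k, is at most (d^k − 1)·(2·α^λ)^d·∏_{i=1}^k C(|V_i|, d). -/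
/-!
Induct on `k`, splitting off the first coordinate. Call `w ∈ V₁` heavy when its fiber
`H_w ⊆ V₂ × ⋯ × V_k` has more than `(αλ)^(k-1) ∏_{i ≥ 2} |V_i|` elements; by Markov's inequality
at most `αλ|V₁|` points are heavy. If `|H ∩ (W₁ × ⋯ × W_k)| > kλd^k`, then either `W₁` contains
more than `λd` heavy points, or some light `w ∈ W₁` has a fiber meeting `W₂ × ⋯ × W_k` in more
than `(k-1)λd^(k-1)` points. The first event is a hypergeometric tail: a `d`-set meets a set of
density `≤ αλ` in `t ≥ λd` points for at most a `(αλ)^t C(d,t) ≤ (2α^λ)^d` fraction of all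
`d`-sets. The second is counted by induction, with `d C(|V₁|, d)` choices of `(w, W₁)`. Hence the
number of rich boxes is at most `a_k (2α^λ)^d ∏ C(|V_i|, d)` with `a₁ = 1`, `a_k = 1 + d a_{k-1}`,
and `a_k ≤ d^k - 1` as `d ≥ 2`.
-/

open Finset Fintype

section

variable {γ : Type*}

theorem Nat.descFactorial_mul_pow_le {m n : ℕ} (h : m ≤ n) (t : ℕ) :
    m.descFactorial t * n ^ t ≤ n.descFactorial t * m ^ t := by
  induction t with
  | zero => simp
  | succ t ih =>
    have key : (m - t) * n ≤ (n - t) * m := by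
      rw [Nat.sub_mul, Nat.sub_mul, mul_comm n m]
      exact Nat.sub_le_sub_left (Nat.mul_le_mul_left t h) _
    calc m.descFactorial (t + 1) * n ^ (t + 1)
        = ((m - t) * n) * (m.descFactorial t * n ^ t) := by
          rw [Nat.descFactorial_succ, pow_succ]; ring
      _ ≤ ((n - t) * m) * (n.descFactorial t * m ^ t) := Nat.mul_le_mul key ih
      _ = n.descFactorial (t + 1) * m ^ (t + 1) := by
          rw [Nat.descFactorial_succ, pow_succ]; ring

theorem Nat.choose_mul_pow_le {m n : ℕ} (h : m ≤ n) (t : ℕ) :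
    m.choose t * n ^ t ≤ n.choose t * m ^ t := by
  refine Nat.le_of_mul_le_mul_left ?_ t.factorial_pos
  simpa only [Nat.descFactorial_eq_factorial_mul_choose, mul_assoc] using
    Nat.descFactorial_mul_pow_le h t

theorem choose_le_pow_mul_choose {m n : ℕ} {c : ℝ} (hmn : m ≤ n) (hm : (m : ℝ) ≤ c * n)
    (t : ℕ) : (m.choose t : ℝ) ≤ c ^ t * n.choose t := by
  rcases n.eq_zero_or_pos with rfl | hn
  · obtain rfl : m = 0 := Nat.le_zero.1 hmn
    cases t <;> simp
  have hpow : (0 : ℝ) < (n : ℝ) ^ t := by positivity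
  refine le_of_mul_le_mul_right ?_ hpow
  calc (m.choose t : ℝ) * (n : ℝ) ^ t ≤ n.choose t * (m : ℝ) ^ t := by
        exact_mod_cast Nat.choose_mul_pow_le hmn t
    _ ≤ n.choose t * (c * n) ^ t := by gcongr
    _ = c ^ t * n.choose t * (n : ℝ) ^ t := by ring

theorem Nat.mul_choose_sub_one {n d : ℕ} (hd : 1 ≤ d) :
    n * (n - 1).choose (d - 1) = d * n.choose d := by
  obtain ⟨e, rfl⟩ := Nat.exists_eq_add_of_le' hd
  cases n with
  | zero => simp
  | succ n => simpa [mul_comm] using Nat.add_one_mul_choose_eq n e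

theorem card_filter_lt_mul_le_sum {ι : Type*} (s : Finset ι) {f : ι → ℝ}
    (hf : ∀ i ∈ s, 0 ≤ f i) (c : ℝ) : #{i ∈ s | c < f i} * c ≤ ∑ i ∈ s, f i :=
  calc #{i ∈ s | c < f i} * c ≤ ∑ i ∈ s with c < f i, f i := by
        rw [← nsmul_eq_mul]
        exact card_nsmul_le_sum _ _ _ fun i hi => (mem_filter.1 hi).2.le
    _ ≤ ∑ i ∈ s, f i := sum_le_sum_of_subset_of_nonneg (filter_subset _ _) fun i hi _ => hf i hi

theorem Nat.card_subtype_eq_card {ι : Type*} (s : Finset ι) {p : ι → Prop} (h : ∀ x, p x ↔ x ∈ s) :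
    Nat.card {x // p x} = #s := by
  rw [Nat.card_congr (Equiv.subtypeEquivRight h), Nat.card_eq_finsetCard]

theorem card_powersetCard_filter_le_card_inter [DecidableEq γ] {B V : Finset γ} (hBV : B ⊆ V)
    {c : ℝ} (hB : (#B : ℝ) ≤ c * #V) {t d : ℕ} (htd : t ≤ d) :
    (#{W ∈ V.powersetCard d | t ≤ #(W ∩ B)} : ℝ) ≤ c ^ t * d.choose t * (#V).choose d := by
  have hcover : {W ∈ V.powersetCard d | t ≤ #(W ∩ B)} ⊆
      (B.powersetCard t).biUnion fun T => {W ∈ V.powersetCard d | T ⊆ W} := by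
    intro W hW
    simp only [mem_filter] at hW
    obtain ⟨T, hT, hTcard⟩ := exists_subset_card_eq hW.2
    exact mem_biUnion.2 ⟨T, mem_powersetCard.2 ⟨hT.trans inter_subset_right, hTcard⟩,
      mem_filter.2 ⟨hW.1, hT.trans inter_subset_left⟩⟩
  have hcount : #{W ∈ V.powersetCard d | t ≤ #(W ∩ B)} ≤
      (#B).choose t * (#V - t).choose (d - t) := by
    calc _ ≤ _ := card_le_card hcover
      _ ≤ ∑ T ∈ B.powersetCard t, #{W ∈ V.powersetCard d | T ⊆ W} := card_biUnion_le
      _ = ∑ _T ∈ B.powersetCard t, (#V - t).choose (d - t) := by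
          refine sum_congr rfl fun T hT => ?_
          rw [mem_powersetCard] at hT
          rw [card_filter_powersetCard_subset T V d (hT.1.trans hBV) (hT.2 ▸ htd), hT.2]
      _ = (#B).choose t * (#V - t).choose (d - t) := by
          rw [sum_const, card_powersetCard, smul_eq_mul]
  calc (#{W ∈ V.powersetCard d | t ≤ #(W ∩ B)} : ℝ)
      ≤ (#B).choose t * (#V - t).choose (d - t) := by exact_mod_cast hcount
    _ ≤ c ^ t * (#V).choose t * (#V - t).choose (d - t) := by
        gcongr
        exact choose_le_pow_mul_choose (card_le_card hBV) hB t
    _ = c ^ t * d.choose t * (#V).choose d := by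
        rw [mul_assoc, mul_assoc, ← Nat.cast_mul, ← Nat.cast_mul, ← Nat.choose_mul htd,
          mul_comm (d.choose t)]

theorem pow_mul_choose_le_two_mul_rpow_pow {α lam : ℝ} (hα₀ : 0 < α) (hα₁ : α ≤ 1)
    (hlam₀ : 0 ≤ lam) (hlam₁ : lam ≤ 1) {d t : ℕ} (ht : lam * d ≤ t) :
    (α * lam) ^ t * d.choose t ≤ (2 * α ^ lam) ^ d := by
  have hchoose : (d.choose t : ℝ) ≤ 2 ^ d := by exact_mod_cast d.choose_le_two_pow t
  have hpow : (α * lam) ^ t ≤ α ^ (lam * d) :=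
    calc (α * lam) ^ t ≤ α ^ t := by gcongr; nlinarith
      _ = α ^ (t : ℝ) := (Real.rpow_natCast α t).symm
      _ ≤ α ^ (lam * d) := Real.rpow_le_rpow_of_exponent_ge hα₀ hα₁ ht
  calc (α * lam) ^ t * d.choose t ≤ α ^ (lam * d) * 2 ^ d := by gcongr
    _ = (2 * α ^ lam) ^ d := by
        rw [mul_pow, ← Real.rpow_natCast (α ^ lam), ← Real.rpow_mul hα₀.le, mul_comm]

theorem card_powersetCard_filter_lt_card_inter [DecidableEq γ] {α lam : ℝ} (hα₀ : 0 < α)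
    (hα₁ : α ≤ 1) (hlam₀ : 0 ≤ lam) (hlam₁ : lam ≤ 1) {B V : Finset γ} (hBV : B ⊆ V)
    (hB : (#B : ℝ) ≤ α * lam * #V) (d : ℕ) :
    (#{W ∈ V.powersetCard d | lam * d < #(W ∩ B)} : ℝ) ≤ (2 * α ^ lam) ^ d * (#V).choose d := by
  set t := ⌈lam * d⌉₊
  have htd : t ≤ d := Nat.ceil_le.2 (by nlinarith)
  have hsub : {W ∈ V.powersetCard d | lam * d < #(W ∩ B)} ⊆
      {W ∈ V.powersetCard d | t ≤ #(W ∩ B)} :=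
    monotone_filter_right _ fun _ _ h => Nat.ceil_le.2 h.le
  calc (#{W ∈ V.powersetCard d | lam * d < #(W ∩ B)} : ℝ)
      ≤ #{W ∈ V.powersetCard d | t ≤ #(W ∩ B)} := by exact_mod_cast card_le_card hsub
    _ ≤ (α * lam) ^ t * d.choose t * (#V).choose d :=
        card_powersetCard_filter_le_card_inter hBV hB htd
    _ ≤ (2 * α ^ lam) ^ d * (#V).choose d := by
        gcongr
        exact pow_mul_choose_le_two_mul_rpow_pow hα₀ hα₁ hlam₀ hlam₁ (Nat.le_ceil _)

theorem card_filter_piFinset_head {δ : Type*} {n : ℕ} (s : Fin (n + 1) → Finset δ) (p : δ → Prop)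
    [DecidablePred p] :
    #{W ∈ piFinset s | p (W 0)} = #{x ∈ s 0 | p x} * ∏ j : Fin n, #(s j.succ) := by
  have : {W ∈ piFinset s | p (W 0)} = piFinset (Fin.cons {x ∈ s 0 | p x} (Fin.tail s)) := by
    ext W
    simp only [mem_filter, Fin.mem_piFinset_iff_zero_tail (f := W), Fin.cons_zero, Fin.tail_cons]
    tauto
  rw [this, card_piFinset, Fin.prod_univ_succ, Fin.cons_zero]
  rfl

variable {k d : ℕ}

noncomputable def headFiber (H : Finset (Fin (k + 1) → γ)) (w : γ) : Finset (Fin k → γ) :=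
  H.preimage (Fin.cons (α := fun _ => γ) w) (Fin.cons_right_injective _).injOn

@[simp]
theorem mem_headFiber {H : Finset (Fin (k + 1) → γ)} {w : γ} {g : Fin k → γ} :
    g ∈ headFiber H w ↔ (Fin.cons w g : Fin (k + 1) → γ) ∈ H :=
  mem_preimage ..

theorem headFiber_subset_piFinset {V : Fin (k + 1) → Finset γ} {H : Finset (Fin (k + 1) → γ)}
    (hH : H ⊆ piFinset V) (w : γ) : headFiber H w ⊆ piFinset (Fin.tail V) := fun _ hg =>
  (Fin.mem_piFinset_iff_zero_tail.1 (hH (mem_headFiber.1 hg))).2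

variable [DecidableEq γ]

noncomputable def richBoxes (V : Fin k → Finset γ) (d : ℕ) (H : Finset (Fin k → γ)) (τ : ℝ) :
    Finset (Fin k → Finset γ) :=
  {W ∈ piFinset fun i => (V i).powersetCard d | τ < #(H ∩ piFinset W)}

theorem card_inter_piFinset_eq_sum_headFiber (H : Finset (Fin (k + 1) → γ))
    (W : Fin (k + 1) → Finset γ) :
    #(H ∩ piFinset W) = ∑ w ∈ W 0, #(headFiber H w ∩ piFinset (Fin.tail W)) := by
  rw [card_eq_sum_card_fiberwise fun f hf => (mem_piFinset.1 (mem_inter.1 hf).2) 0]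
  refine sum_congr rfl fun w hw => card_nbij' Fin.tail (Fin.cons (α := fun _ => γ) w) ?_ ?_ ?_ ?_
  · intro f hf
    rw [mem_coe, mem_filter, mem_inter, Fin.mem_piFinset_iff_zero_tail] at hf
    obtain ⟨⟨hH, -, htail⟩, rfl⟩ := hf
    rw [mem_coe, mem_inter, mem_headFiber, Fin.cons_self_tail]
    exact ⟨hH, htail⟩
  · intro g hg
    rw [mem_coe, mem_inter, mem_headFiber] at hg
    rw [mem_coe, mem_filter, mem_inter, Fin.mem_piFinset_iff_zero_tail, Fin.cons_zero,
      Fin.tail_cons]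
    exact ⟨⟨hg.1, hw, hg.2⟩, rfl⟩
  · intro f hf
    rw [mem_coe, mem_filter] at hf
    rw [← hf.2, Fin.cons_self_tail]
  · intro g _
    exact Fin.tail_cons _ _

theorem sum_card_headFiber {V : Fin (k + 1) → Finset γ} {H : Finset (Fin (k + 1) → γ)}
    (hH : H ⊆ piFinset V) : ∑ w ∈ V 0, #(headFiber H w) = #H := by
  simpa only [inter_eq_left.2 hH, inter_eq_left.2 (headFiber_subset_piFinset hH _)] using
    (card_inter_piFinset_eq_sum_headFiber H V).symm

variable {α lam : ℝ}

theorem card_filter_piFinset_lt_card_inter_head (hα₀ : 0 < α) (hα₁ : α ≤ 1) (hlam₀ : 0 ≤ lam)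
    (hlam₁ : lam ≤ 1) (V : Fin (k + 1) → Finset γ) {B : Finset γ} (hBV : B ⊆ V 0)
    (hB : (#B : ℝ) ≤ α * lam * #(V 0)) (d : ℕ) :
    (#{W ∈ piFinset (fun i => (V i).powersetCard d) | lam * d < #(W 0 ∩ B)} : ℝ) ≤
      (2 * α ^ lam) ^ d * ∏ i, ((#(V i)).choose d : ℝ) := by
  rw [card_filter_piFinset_head _ fun S => lam * d < #(S ∩ B), Nat.cast_mul, Fin.prod_univ_succ,
    ← mul_assoc]
  simp only [card_powersetCard, Nat.cast_prod]
  gcongr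
  exact card_powersetCard_filter_lt_card_inter hα₀ hα₁ hlam₀ hlam₁ hBV hB d

theorem lt_card_inter_or_tail_mem_richBoxes (hlam : 0 ≤ lam)
    {V : Fin (k + 1) → Finset γ} {H : Finset (Fin (k + 1) → γ)} (B : Finset γ)
    {W : Fin (k + 1) → Finset γ}
    (hW : W ∈ richBoxes V d H ((k + 1) * lam * d ^ (k + 1))) :
    lam * d < #(W 0 ∩ B) ∨
      ∃ w ∈ W 0 \ B, Fin.tail W ∈ richBoxes (Fin.tail V) d (headFiber H w) (k * lam * d ^ k) := by
  rw [richBoxes, mem_filter] at hW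
  obtain ⟨hWV, hWrich⟩ := hW
  have hWV' := mem_piFinset.1 hWV
  have hcard : ∀ i, #(W i) = d := fun i => (mem_powersetCard.1 (hWV' i)).2
  by_contra! h
  obtain ⟨hheavy, hlight⟩ := h
  have hbox : ∀ w, (#(headFiber H w ∩ piFinset (Fin.tail W)) : ℝ) ≤ d ^ k := fun w => by
    have : #(headFiber H w ∩ piFinset (Fin.tail W)) ≤ d ^ k := by
      calc _ ≤ #(piFinset (Fin.tail W)) := card_le_card inter_subset_right
        _ = d ^ k := by simp [card_piFinset, Fin.tail, hcard]
    exact_mod_cast this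
  have hlight' : ∀ w ∈ W 0 \ B,
      (#(headFiber H w ∩ piFinset (Fin.tail W)) : ℝ) ≤ k * lam * d ^ k := fun w hw =>
    not_lt.1 fun h => hlight w hw (mem_filter.2 ⟨mem_piFinset.2 fun j => hWV' j.succ, h⟩)
  have hsdiff : (#(W 0 \ B) : ℝ) ≤ d := by
    exact_mod_cast (card_le_card sdiff_subset).trans (hcard 0).le
  refine hWrich.not_ge ?_
  rw [card_inter_piFinset_eq_sum_headFiber, Nat.cast_sum, ← sum_inter_add_sum_sdiff _ B]
  calc ∑ w ∈ W 0 ∩ B, (#(headFiber H w ∩ piFinset (Fin.tail W)) : ℝ) +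
        ∑ w ∈ W 0 \ B, (#(headFiber H w ∩ piFinset (Fin.tail W)) : ℝ)
      ≤ #(W 0 ∩ B) * d ^ k + #(W 0 \ B) * (k * lam * d ^ k) := by
        gcongr
        · exact (sum_le_sum fun w _ => hbox w).trans_eq (by rw [sum_const, nsmul_eq_mul])
        · exact (sum_le_sum hlight').trans_eq (by rw [sum_const, nsmul_eq_mul])
    _ ≤ lam * d * d ^ k + d * (k * lam * d ^ k) := by gcongr
    _ = (k + 1) * lam * d ^ (k + 1) := by ring

theorem card_richBoxes_succ_le_add_sum (hlam : 0 ≤ lam) (hd : 1 ≤ d) (V : Fin (k + 1) → Finset γ)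
    (H : Finset (Fin (k + 1) → γ)) (B : Finset γ) :
    #(richBoxes V d H ((k + 1) * lam * d ^ (k + 1))) ≤
      #{W ∈ piFinset (fun i => (V i).powersetCard d) | lam * d < #(W 0 ∩ B)} +
        (#(V 0) - 1).choose (d - 1) *
          ∑ w ∈ V 0 \ B, #(richBoxes (Fin.tail V) d (headFiber H w) (k * lam * d ^ k)) := by
  set R := fun w => richBoxes (Fin.tail V) d (headFiber H w) (k * lam * d ^ k)
  set C := fun w => {S ∈ (V 0).powersetCard d | {w} ⊆ S}
  have hcover : richBoxes V d H ((k + 1) * lam * d ^ (k + 1)) ⊆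
      {W ∈ piFinset (fun i => (V i).powersetCard d) | lam * d < #(W 0 ∩ B)} ∪
        (V 0 \ B).biUnion fun w => (C w ×ˢ R w).image fun p => Fin.cons p.1 p.2 := by
    intro W hW
    have hWV := (mem_filter.1 hW).1
    have hW0 := mem_powersetCard.1 (mem_piFinset.1 hWV 0)
    rcases lt_card_inter_or_tail_mem_richBoxes hlam B hW with h | ⟨w, hw, htail⟩
    · exact mem_union_left _ (mem_filter.2 ⟨hWV, h⟩)
    · refine mem_union_right _ (mem_biUnion.2 ⟨w, sdiff_subset_sdiff hW0.1 le_rfl hw, ?_⟩)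
      refine mem_image.2 ⟨(W 0, Fin.tail W), mem_product.2 ⟨?_, htail⟩, Fin.cons_self_tail W⟩
      exact mem_filter.2 ⟨mem_powersetCard.2 hW0, singleton_subset_iff.2 (mem_sdiff.1 hw).1⟩
  have hC : ∀ w ∈ V 0 \ B, #(C w) = (#(V 0) - 1).choose (d - 1) := fun w hw => by
    simpa [C] using card_filter_powersetCard_subset {w} (V 0) d
      (singleton_subset_iff.2 (mem_sdiff.1 hw).1) (by simpa using hd)
  calc _ ≤ _ := card_le_card hcover
    _ ≤ _ := card_union_le _ _
    _ ≤ #{W ∈ piFinset (fun i => (V i).powersetCard d) | lam * d < #(W 0 ∩ B)} +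
          ∑ w ∈ V 0 \ B, #(C w ×ˢ R w) := by
        gcongr
        exact card_biUnion_le.trans (sum_le_sum fun w _ => card_image_le)
    _ = _ := by
        rw [mul_sum]
        exact congrArg _ (sum_congr rfl fun w hw => by rw [card_product, hC w hw])

theorem card_richBoxes_succ_le (hα₀ : 0 < α) (hα₁ : α ≤ 1) (hlam₀ : 0 < lam) (hlam₁ : lam ≤ 1)
    (hd : 1 ≤ d) {V : Fin (k + 1) → Finset γ} (hV : ∀ i, (V i).Nonempty)
    {H : Finset (Fin (k + 1) → γ)} (hH : H ⊆ piFinset V)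
    (hHcard : (#H : ℝ) ≤ (α * lam) ^ (k + 1) * ∏ i, (#(V i) : ℝ)) {M : ℝ}
    (ih : ∀ H' ⊆ piFinset (Fin.tail V),
      (#H' : ℝ) ≤ (α * lam) ^ k * ∏ j : Fin k, (#(V j.succ) : ℝ) →
        (#(richBoxes (Fin.tail V) d H' (k * lam * d ^ k)) : ℝ) ≤ M) :
    (#(richBoxes V d H ((k + 1) * lam * d ^ (k + 1))) : ℝ) ≤
      (2 * α ^ lam) ^ d * ∏ i, ((#(V i)).choose d : ℝ) + d * (#(V 0)).choose d * M := by
  set c := (α * lam) ^ k * ∏ j : Fin k, (#(V j.succ) : ℝ)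
  have hc : 0 < c := mul_pos (by positivity)
    (prod_pos fun j _ => by exact_mod_cast (hV j.succ).card_pos)
  set B := {w ∈ V 0 | c < #(headFiber H w)}
  have hB : (#B : ℝ) ≤ α * lam * #(V 0) := by
    refine le_of_mul_le_mul_right ?_ hc
    calc (#B : ℝ) * c ≤ ∑ w ∈ V 0, (#(headFiber H w) : ℝ) :=
          card_filter_lt_mul_le_sum _ (fun _ _ => by positivity) c
      _ = #H := by rw [← Nat.cast_sum, sum_card_headFiber hH]
      _ ≤ α * lam * #(V 0) * c := hHcard.trans_eq (by rw [Fin.prod_univ_succ, pow_succ]; ring)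
  have hlight : ∀ w ∈ V 0 \ B,
      (#(richBoxes (Fin.tail V) d (headFiber H w) (k * lam * d ^ k)) : ℝ) ≤ M := fun w hw =>
    ih _ (headFiber_subset_piFinset hH w)
      (by simpa [B, (mem_sdiff.1 hw).1] using (mem_sdiff.1 hw).2)
  have hM : 0 ≤ M := (Nat.cast_nonneg _).trans (ih ∅ (empty_subset _) (by simp; positivity))
  calc (#(richBoxes V d H ((k + 1) * lam * d ^ (k + 1))) : ℝ)
      ≤ #{W ∈ piFinset (fun i => (V i).powersetCard d) | lam * d < #(W 0 ∩ B)} +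
        (#(V 0) - 1).choose (d - 1) *
          ∑ w ∈ V 0 \ B, (#(richBoxes (Fin.tail V) d (headFiber H w) (k * lam * d ^ k)) : ℝ) := by
        exact_mod_cast card_richBoxes_succ_le_add_sum hlam₀.le hd V H B
    _ ≤ (2 * α ^ lam) ^ d * ∏ i, ((#(V i)).choose d : ℝ) +
          (#(V 0) - 1).choose (d - 1) * (#(V 0) * M) := by
        gcongr
        · exact card_filter_piFinset_lt_card_inter_head hα₀ hα₁ hlam₀.le hlam₁ V
            (filter_subset _ _) hB d
        · calc _ ≤ ∑ _w ∈ V 0 \ B, M := sum_le_sum hlight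
            _ = #(V 0 \ B) * M := by rw [sum_const, nsmul_eq_mul]
            _ ≤ #(V 0) * M := by gcongr; exact sdiff_subset
    _ = (2 * α ^ lam) ^ d * ∏ i, ((#(V i)).choose d : ℝ) + d * (#(V 0)).choose d * M := by
        have key : (#(V 0) : ℝ) * (#(V 0) - 1).choose (d - 1) = d * (#(V 0)).choose d := by
          exact_mod_cast Nat.mul_choose_sub_one hd
        rw [← key]
        ring

theorem card_richBoxes_one_le (hα₀ : 0 < α) (hα₁ : α ≤ 1) (hlam₀ : 0 ≤ lam) (hlam₁ : lam ≤ 1)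
    {V : Fin 1 → Finset γ} {H : Finset (Fin 1 → γ)} (hH : H ⊆ piFinset V)
    (hHcard : (#H : ℝ) ≤ α * lam * #(V 0)) (d : ℕ) :
    (#(richBoxes V d H (lam * d)) : ℝ) ≤ (2 * α ^ lam) ^ d * (#(V 0)).choose d := by
  set B := H.image (· 0)
  have hBV : B ⊆ V 0 := image_subset_iff.2 fun f hf => mem_piFinset.1 (hH hf) 0
  have hB : (#B : ℝ) ≤ α * lam * #(V 0) := le_trans (by exact_mod_cast card_image_le) hHcard
  -- `B` contains every point with a nonempty fiber, so the second alternative cannot occur.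
  have hsub : richBoxes V d H (lam * d) ⊆
      {W ∈ piFinset (fun i => (V i).powersetCard d) | lam * d < #(W 0 ∩ B)} := by
    intro W hW
    refine mem_filter.2 ⟨(mem_filter.1 hW).1, ?_⟩
    rcases lt_card_inter_or_tail_mem_richBoxes (k := 0) hlam₀ B (by simpa using hW) with
      h | ⟨w, hw, htail⟩
    · exact h
    · obtain ⟨g, hg⟩ : (headFiber H w ∩ piFinset (Fin.tail W)).Nonempty := by
        simpa [richBoxes] using (mem_filter.1 htail).2
      exact absurd (mem_image.2 ⟨_, mem_headFiber.1 (mem_inter.1 hg).1, rfl⟩) (mem_sdiff.1 hw).2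
  calc (#(richBoxes V d H (lam * d)) : ℝ)
      ≤ #{W ∈ piFinset (fun i => (V i).powersetCard d) | lam * d < #(W 0 ∩ B)} := by
        exact_mod_cast card_le_card hsub
    _ ≤ (2 * α ^ lam) ^ d * ∏ i, ((#(V i)).choose d : ℝ) :=
        card_filter_piFinset_lt_card_inter_head hα₀ hα₁ hlam₀ hlam₁ V hBV hB d
    _ = (2 * α ^ lam) ^ d * (#(V 0)).choose d := by rw [Fin.prod_univ_one]

theorem card_richBoxes_le (hα₀ : 0 < α) (hα₁ : α ≤ 1) (hlam₀ : 0 < lam) (hlam₁ : lam ≤ 1)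
    (hd : 2 ≤ d) (hk : 1 ≤ k) {V : Fin k → Finset γ} (hV : ∀ i, (V i).Nonempty)
    {H : Finset (Fin k → γ)} (hH : H ⊆ piFinset V)
    (hHcard : (#H : ℝ) ≤ (α * lam) ^ k * ∏ i, (#(V i) : ℝ)) :
    (#(richBoxes V d H (k * lam * d ^ k)) : ℝ) ≤
      (d ^ k - 1) * (2 * α ^ lam) ^ d * ∏ i, ((#(V i)).choose d : ℝ) := by
  have hd' : (2 : ℝ) ≤ d := by exact_mod_cast hd
  induction k, hk using Nat.le_induction with
  | base =>
    have := card_richBoxes_one_le hα₀ hα₁ hlam₀.le hlam₁ hH (by simpa using hHcard) d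
    rw [Fin.prod_univ_one]
    simp only [Nat.cast_one, one_mul, pow_one]
    nlinarith [show 0 ≤ (2 * α ^ lam) ^ d * (#(V 0)).choose d by positivity]
  | succ k hk ih =>
    have := card_richBoxes_succ_le hα₀ hα₁ hlam₀ hlam₁ (by omega) hV hH hHcard
      fun H' hH' hH'card => ih (fun j => hV j.succ) hH' hH'card
    push_cast
    refine this.trans (le_of_eq_of_le ?_ (sub_le_self _ (mul_nonneg (sub_nonneg.2 hd')
      (by positivity : (0 : ℝ) ≤ (2 * α ^ lam) ^ d * ∏ i, ((#(V i)).choose d : ℝ)))))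
    rw [Fin.prod_univ_succ]
    ring

end

theorem stmt18 (k : ℕ) (hk : 1 ≤ k) (α lam : ℝ)
    (hα : α ∈ Set.Ioo (0 : ℝ) 1) (hlam : lam ∈ Set.Ioo (0 : ℝ) 1)
    (γ : Type) (V : Fin k → Finset γ) (d : ℕ) (hd2 : 2 ≤ d) (hd : ∀ i, d ≤ (V i).card)
    (H : Finset (Fin k → γ)) (hHsub : ∀ f ∈ H, ∀ i, f i ∈ V i)
    (hHcard : (H.card : ℝ) ≤ (α * lam) ^ k * ∏ i, ((V i).card : ℝ)) :
    (Nat.card {W : Fin k → Finset γ //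
        (∀ i, W i ⊆ V i ∧ (W i).card = d) ∧
        (k : ℝ) * lam * (d : ℝ) ^ k <
          (Nat.card {f : Fin k → γ // f ∈ H ∧ ∀ i, f i ∈ W i} : ℝ)} : ℝ) ≤
      ((d : ℝ) ^ k - 1) * (2 * α ^ lam) ^ d * ∏ i, (((V i).card.choose d : ℕ) : ℝ) := by
  classical
  have hbox : ∀ W : Fin k → Finset γ,
      Nat.card {f : Fin k → γ // f ∈ H ∧ ∀ i, f i ∈ W i} = #(H ∩ piFinset W) := fun W =>
    Nat.card_subtype_eq_card _ fun f => by simp [mem_piFinset]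
  rw [Nat.card_subtype_eq_card (richBoxes V d H (k * lam * d ^ k)) fun W => by
    simp [richBoxes, mem_piFinset, hbox]]
  exact card_richBoxes_le hα.1 hα.2.le hlam.1 hlam.2.le hd2 hk
    (fun i => card_pos.1 (by have := hd i; omega)) (fun f hf => mem_piFinset.2 (hHsub f hf)) hHcard
end
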